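/- The T-trace cycle contains each suffix link arc f_i = (i, S(i)) (1 ≤ i ≤ n) exactly once, and it contains exactly n occurrences of edges of E in total. -/

import Mathlib

/-- `heapHList T i = [h_0, h_1, …, h_i]`: `h_0 = ε` and `h_i` is the shortest
prefix of `T[i:]` (the suffix of `T` starting at 1-indexed position `i`) not
among `h_0, …, h_{i-1}` (falling back to `T[i:]` itself if every prefix
already occurs there). -/
def heapHList {α : Type*} [DecidableEq α] (T : List α) : ℕ → List (List α)
  | 0 => [[]]
  | i + 1 =>
    let prev := heapHList T i
    let suf := T.drop i
    prev ++ [(((List.range (suf.length + 1)).find?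
        (fun k => decide (suf.take k ∉ prev))).elim suf fun k => suf.take k)]

/-- `heapH T i = h_i`. -/
def heapH {α : Type*} [DecidableEq α] (T : List α) (i : ℕ) : List α :=
  (heapHList T i).getD i []

/-- `T` ends with a letter that occurs nowhere else in `T`
(1-indexed: `T[i] ≠ T[n]` for all `1 ≤ i ≤ n - 1`). -/
def EndsUnique {α : Type*} (T : List α) : Prop :=
  ∀ i, i + 1 < T.length → T[i]? ≠ T[T.length - 1]?

open scoped Classical

/-- `p` is a directed path (a list of consecutive arcs) from `a` to `b` in the
graph whose edge relation is `E`. -/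
def IsArcPath {V : Type*} (E : V → V → Prop) : List (V × V) → V → V → Prop
  | [], a, b => a = b
  | e :: p, a, b => e.1 = a ∧ E e.1 e.2 ∧ IsArcPath E p e.2 b

/-- The edge relation of `PH(T)` on the nodes `{0, …, n}` (`n = |T|`). -/
def phEdge {α : Type*} [DecidableEq α] (T : List α) (i j : ℕ) : Prop :=
  i ≤ T.length ∧ j ≤ T.length ∧ ∃ c : α, heapH T i ++ [c] = heapH T j

/-- `p` is the `T`-trace cycle `p_0 · f_1 · p_1 ⋯ f_{n-1} · p_{n-1} · f_n` of
`PHS(T)` (arcs are pairs of nodes): `f_i = (i, S i)`, `p_0` is the `E`-path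
from `0` to `1`, and `p_i` is the `E`-path from `S i` to `i + 1`. -/
def IsTraceCycle {α : Type*} [DecidableEq α] (T : List α) (S : ℕ → ℕ)
    (p : List (ℕ × ℕ)) : Prop :=
  ∃ q : ℕ → List (ℕ × ℕ),
    p = (List.range T.length).flatMap (fun i => q i ++ [(i + 1, S (i + 1))]) ∧
    IsArcPath (phEdge T) (q 0) 0 1 ∧
    (∀ i, 1 ≤ i → i + 1 ≤ T.length → IsArcPath (phEdge T) (q i) (S i) (i + 1))

lemma heapHList_length {α : Type*} [DecidableEq α] (T : List α) (i : ℕ) :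
    (heapHList T i).length = i + 1 := by
  induction i with
  | zero => rfl
  | succ i ih => simp [heapHList, ih]

lemma nil_mem_heapHList {α : Type*} [DecidableEq α] (T : List α) (i : ℕ) :
    ([] : List α) ∈ heapHList T i := by
  induction i with
  | zero => simp [heapHList]
  | succ i ih => simp [heapHList]; left; exact ih

lemma heapH_succ {α : Type*} [DecidableEq α] (T : List α) (i : ℕ) :
    heapH T (i + 1) =
      (((List.range ((T.drop i).length + 1)).find?
        (fun k => decide ((T.drop i).take k ∉ heapHList T i))).elim (T.drop i)
        fun k => (T.drop i).take k) := by
  have h : heapHList T (i + 1) = heapHList T i ++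
      [(((List.range ((T.drop i).length + 1)).find?
        (fun k => decide ((T.drop i).take k ∉ heapHList T i))).elim (T.drop i)
        fun k => (T.drop i).take k)] := rfl
  have hl : i + 1 = (heapHList T i).length := (heapHList_length T i).symm
  rw [heapH, h, List.getD_eq_getElem?_getD, hl, List.getElem?_concat_length]
  rfl

lemma heapH_head {α : Type*} [DecidableEq α] (T : List α) (i : ℕ)
    (x : List α) (hx : x ∈ heapHList T i) (hne : x ≠ []) :
    ∃ j < i, x.head? = T[j]? := by
  induction i with
  | zero => simp [heapHList] at hx; exact absurd hx hne
  | succ i ih =>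
    simp only [heapHList, List.mem_append, List.mem_singleton] at hx
    rcases hx with hx | hx
    · obtain ⟨j, hj, h⟩ := ih hx
      exact ⟨j, Nat.lt_succ_of_lt hj, h⟩
    · refine ⟨i, Nat.lt_succ_self i, ?_⟩
      rcases hf : (List.range ((T.drop i).length + 1)).find?
          (fun k => decide ((T.drop i).take k ∉ heapHList T i)) with _ | k
      · rw [hf] at hx; simp only [Option.elim] at hx
        subst hx
        exact List.head?_drop
      · rw [hf] at hx; simp only [Option.elim] at hx
        subst hx
        have hmem := List.find?_some hf
        simp only [decide_eq_true_eq] at hmem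
        have hk : k ≠ 0 := by
          rintro rfl
          simp only [List.take_zero] at hmem
          exact hmem (nil_mem_heapHList T i)
        rw [List.head?_take, if_neg hk]
        exact List.head?_drop

lemma heapH_last {α : Type*} [DecidableEq α] (T : List α) (hpos : 1 ≤ T.length)
    (hu : EndsUnique T) : (heapH T T.length).length = 1 := by
  obtain ⟨m, hm⟩ : ∃ m, T.length = m + 1 := ⟨T.length - 1, by omega⟩
  have hdl : (T.drop m).length = 1 := by simp [hm]
  obtain ⟨t, ht⟩ := List.length_eq_one_iff.mp hdl
  have htm : T[m]? = some t := by rw [← List.head?_drop, ht]; rfl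
  rw [hm, heapH_succ, hdl, ht]
  have h1 : [t] ∉ heapHList T m := by
    intro hmem
    obtain ⟨j, hj, hh⟩ := heapH_head T m _ hmem (by simp)
    have := hu j (by omega)
    rw [hm] at this
    simp only [Nat.add_sub_cancel] at this
    apply this
    rw [← hh, htm]; rfl
  have e : List.range (1 + 1) = [0, 1] := rfl
  rw [e]
  have e0 : (decide (List.take 0 [t] ∉ heapHList T m)) = false := by
    simp [nil_mem_heapHList]
  have e1 : (decide (List.take 1 [t] ∉ heapHList T m)) = true := by
    simpa using h1
  simp only [List.find?, e0, e1]
  rfl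

lemma isArcPath_len {α : Type*} [DecidableEq α] {T : List α} :
    ∀ (q : List (ℕ × ℕ)) (a b : ℕ), IsArcPath (phEdge T) q a b →
      (heapH T b).length = (heapH T a).length + q.length
  | [], a, b, h => by simp [IsArcPath] at h; simp [h]
  | e :: q, a, b, h => by
    obtain ⟨h1, h2, h3⟩ := h
    obtain ⟨-, -, c, hc⟩ := h2
    have := isArcPath_len q e.2 b h3
    rw [this, ← hc, h1]
    simp
    omega

lemma isArcPath_mem {V : Type*} {E : V → V → Prop} :
    ∀ (q : List (V × V)) (a b : V), IsArcPath E q a b →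
      ∀ e ∈ q, E e.1 e.2
  | [], _, _, _ => by simp
  | e :: q, a, b, h => by
    obtain ⟨h1, h2, h3⟩ := h
    intro e' he'
    rcases List.mem_cons.mp he' with rfl | he'
    · exact h2
    · exact isArcPath_mem q e.2 b h3 e' he'

/-- The `T`-trace cycle contains each suffix-link arc
`f_i = (i, S i)` (`1 ≤ i ≤ n`) exactly once, and exactly `n` occurrences of
edges of `E` in total. Here `S` is any suffix-link map: `S i ∈ {0, …, n}` and
`h_i = c · h_{S(i)}` for some letter `c`, for all `1 ≤ i ≤ n`. -/
theorem statement7 {α : Type*} [DecidableEq α] (T : List α) (n : ℕ)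
    (hn : n = T.length) (hpos : 1 ≤ n) (hu : EndsUnique T)
    (S : ℕ → ℕ)
    (hS : ∀ i, 1 ≤ i → i ≤ n →
      S i ≤ n ∧ ∃ c : α, heapH T i = c :: heapH T (S i))
    (p : List (ℕ × ℕ)) (hp : IsTraceCycle T S p) :
    (∀ i, 1 ≤ i → i ≤ n → p.count (i, S i) = 1) ∧
    p.countP (fun e => decide (∃ c : α, heapH T e.1 ++ [c] = heapH T e.2))
      = n := by
  subst hn
  obtain ⟨q, hpq, hq0, hqi⟩ := hp
  set pred : ℕ × ℕ → Bool :=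
    fun e => decide (∃ c : α, heapH T e.1 ++ [c] = heapH T e.2) with hpred
  -- length of heapH at suffix links
  have lenS : ∀ i, 1 ≤ i → i ≤ T.length →
      (heapH T i).length = (heapH T (S i)).length + 1 := by
    intro i h1 h2
    obtain ⟨-, c, hc⟩ := hS i h1 h2
    rw [hc]; simp
  have noedge : ∀ i, 1 ≤ i → i ≤ T.length →
      ¬ (∃ c : α, heapH T i ++ [c] = heapH T (S i)) := by
    intro i h1 h2 ⟨c, hc⟩
    have h3 := lenS i h1 h2
    have h4 : (heapH T (S i)).length = (heapH T i).length + 1 := by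
      rw [← hc]; simp
    omega
  -- every q m (m < T.length) is an arc path
  have hqpath : ∀ m, m < T.length → IsArcPath (phEdge T)
      (q m) (if m = 0 then 0 else S m) (m + 1) := by
    intro m hm
    rcases Nat.eq_zero_or_pos m with rfl | hm1
    · simpa using hq0
    · rw [if_neg (by omega)]
      exact hqi m hm1 (by omega)
  have hcount0 : ∀ m, m < T.length → ∀ i, 1 ≤ i → i ≤ T.length →
      (q m).count (i, S i) = 0 := by
    intro m hm i h1 h2
    rw [List.count_eq_zero]
    intro hmem
    have := isArcPath_mem (q m) _ _ (hqpath m hm) _ hmem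
    exact noedge i h1 h2 this.2.2
  have hcountP : ∀ m, m < T.length → (q m).countP pred = (q m).length := by
    intro m hm
    rw [List.countP_eq_length]
    intro e he
    have := isArcPath_mem (q m) _ _ (hqpath m hm) e he
    simpa [hpred] using this.2.2
  have hpredlink : ∀ j, j < T.length → pred (j + 1, S (j + 1)) = false := by
    intro j hj
    simpa [hpred] using noedge (j + 1) (by omega) (by omega)
  constructor
  · intro i h1 h2
    rw [hpq]
    have key : ∀ m, m ≤ T.length →
        (((List.range m).flatMap
          (fun j => q j ++ [(j + 1, S (j + 1))])).count (i, S i))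
          = if i ≤ m then 1 else 0 := by
      intro m
      induction m with
      | zero => intro _; rw [if_neg (by omega)]; simp
      | succ m ih =>
        intro hm
        rw [List.range_succ, List.flatMap_append, List.count_append,
          ih (by omega)]
        simp only [List.flatMap_cons, List.flatMap_nil, List.append_nil,
          List.count_append]
        rw [hcount0 m (by omega) i h1 h2]
        have : List.count (i, S i) [(m + 1, S (m + 1))]
            = if m + 1 = i then 1 else 0 := by
          rcases eq_or_ne (m + 1) i with rfl | hne
          · simp
          · rw [if_neg hne, List.count_eq_zero]
            simp
            intro h; omega
        rw [this]
        split_ifs <;> omega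
    rw [key T.length (le_refl T.length), if_pos h2]
  · rw [hpq]
    have key : ∀ m, 1 ≤ m → m ≤ T.length →
        (((List.range m).flatMap
          (fun j => q j ++ [(j + 1, S (j + 1))])).countP pred) + 1
          = (heapH T m).length + m := by
      intro m hm1
      induction m, hm1 using Nat.le_induction with
      | base =>
        intro _
        have hlen := isArcPath_len (q 0) 0 1 hq0
        have h0 : heapH T 0 = [] := rfl
        rw [h0] at hlen
        rw [show List.range 1 = [0] from rfl]
        simp only [List.flatMap_cons, List.flatMap_nil,
          List.append_nil, List.countP_append]
        rw [hcountP 0 (by omega)]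
        rw [List.countP_singleton, hpredlink 0 (by omega)]
        rw [List.length_nil] at hlen
        simp only [Bool.false_eq_true, if_false]
        omega
      | succ m hm1 ih =>
        intro hm
        rw [List.range_succ, List.flatMap_append, List.countP_append,
          List.flatMap_cons, List.flatMap_nil, List.append_nil,
          List.countP_append]
        have hlen := isArcPath_len (q m) (S m) (m + 1) (hqi m hm1 hm)
        have hLS := lenS m hm1 (by omega)
        rw [hcountP m (by omega), List.countP_singleton,
          hpredlink m (by omega)]
        have := ih (by omega)
        simp only [Bool.false_eq_true, if_false]
        omega
    have := key T.length hpos (le_refl T.length)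
    have hl := heapH_last T hpos hu
    omega
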